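/- Consider updates θ_{t+1} = θₜ − αₜ·dₜ with ‖dₜ‖ ≤ M/ξ, auxiliary extrapolation z_{t+1} = (1 − 1/βₜ)θₜ + (1/βₜ)θ_{t+1}, and define ℱₜ = Σ_{j=1}^{t−1} θⱼ⁽ᵗ⁻¹⁾‖θₜ − z_{j+1}‖ with the convex coefficients θⱼ⁽ᵗ⁾ induced by (βₜ). Then ℱₜ ≤ (1 − β_{t−1})(ℱ_{t−1} + 2‖θₜ − θ_{t−1}‖), and consequently ℱₜ² ≤ (1 − β_{t−1})ℱ_{t−1}² + (4/β_{t−1})‖θₜ − θ_{t−1}‖² ≤ (1 − β_{t−1})ℱ_{t−1}² + (4M²/ξ²)·α_{t−1}²/β_{t−1}. -/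

import Mathlib

/-!
The coefficients satisfy `θⱼ⁽ⁿ⁺¹⁾ = (1 − βₙ₊₁) θⱼ⁽ⁿ⁾` for `j ≤ n` and `θₙ₊₁⁽ⁿ⁺¹⁾ = βₙ₊₁`. In the
old terms of `ℱₙ₊₂` the triangle inequality replaces `θₙ₊₂` by `θₙ₊₁` at a cost of
`‖θₙ₊₂ − θₙ₊₁‖` per unit of weight, and the old weights sum to at most one. The new term is
`(1 − βₙ₊₁) ‖θₙ₊₂ − θₙ₊₁‖`, since `θₙ₊₂ − zₙ₊₂` is a multiple of `θₙ₊₂ − θₙ₊₁`. Squaring then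
uses Young's inequality `(a + c)² ≤ (1 + β) a² + (1 + 1/β) c²`.
-/

/-- The convex-combination coefficients `θⱼ⁽ᵗ⁾ = βⱼ ∏_{i=j+1}^t (1 - βᵢ)`. -/
def smoothingCoef (β : ℕ → ℝ) (j t : ℕ) : ℝ :=
  β j * ∏ i ∈ Finset.Icc (j + 1) t, (1 - β i)

/-- `ℱₜ = Σ_{j=1}^{t−1} θⱼ⁽ᵗ⁻¹⁾ ‖θₜ − z_{j+1}‖`. -/
noncomputable def Fseq {p : ℕ} (β : ℕ → ℝ) (θ z : ℕ → EuclideanSpace ℝ (Fin p)) (t : ℕ) : ℝ :=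
  ∑ j ∈ Finset.Icc 1 (t - 1), smoothingCoef β j (t - 1) * ‖θ t - z (j + 1)‖

open Finset

lemma smoothingCoef_nonneg {β : ℕ → ℝ} (hβ : ∀ i, β i ∈ Set.Icc (0 : ℝ) 1) (j t : ℕ) :
    0 ≤ smoothingCoef β j t :=
  mul_nonneg (hβ j).1 (prod_nonneg fun i _ => sub_nonneg.2 (hβ i).2)

lemma smoothingCoef_self (β : ℕ → ℝ) (n : ℕ) : smoothingCoef β n n = β n := by
  simp [smoothingCoef]

lemma smoothingCoef_succ {β : ℕ → ℝ} {j n : ℕ} (hj : j ≤ n) :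
    smoothingCoef β j (n + 1) = smoothingCoef β j n * (1 - β (n + 1)) := by
  rw [smoothingCoef, smoothingCoef, prod_Icc_succ_top (by omega), mul_assoc]

lemma sum_smoothingCoef (β : ℕ → ℝ) (n : ℕ) :
    ∑ j ∈ Icc 1 n, smoothingCoef β j n = 1 - ∏ i ∈ Icc 1 n, (1 - β i) := by
  induction n with
  | zero => simp
  | succ n ih =>
    rw [sum_Icc_succ_top (by omega), prod_Icc_succ_top (by omega),
      sum_congr rfl fun j hj => smoothingCoef_succ (mem_Icc.1 hj).2, ← sum_mul, ih,
      smoothingCoef_self]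
    ring

lemma sum_smoothingCoef_le_one {β : ℕ → ℝ} (hβ : ∀ i, β i ≤ 1) (n : ℕ) :
    ∑ j ∈ Icc 1 n, smoothingCoef β j n ≤ 1 := by
  rw [sum_smoothingCoef, sub_le_self_iff]
  exact prod_nonneg fun i _ => sub_nonneg.2 (hβ i)

lemma Fseq_nonneg {p : ℕ} {β : ℕ → ℝ} (hβ : ∀ i, β i ∈ Set.Icc (0 : ℝ) 1)
    (θ z : ℕ → EuclideanSpace ℝ (Fin p)) (t : ℕ) : 0 ≤ Fseq β θ z t :=
  sum_nonneg fun j _ => mul_nonneg (smoothingCoef_nonneg hβ j _) (norm_nonneg _)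

lemma Fseq_add_two {p : ℕ} (β : ℕ → ℝ) (θ z : ℕ → EuclideanSpace ℝ (Fin p)) (n : ℕ) :
    Fseq β θ z (n + 2) = (1 - β (n + 1)) * ∑ j ∈ Icc 1 n,
        smoothingCoef β j n * ‖θ (n + 2) - z (j + 1)‖
      + β (n + 1) * ‖θ (n + 2) - z (n + 2)‖ := by
  rw [Fseq, show n + 2 - 1 = n + 1 by omega, sum_Icc_succ_top (by omega), smoothingCoef_self,
    mul_sum]
  congr 1
  refine sum_congr rfl fun j hj => ?_
  rw [smoothingCoef_succ (mem_Icc.1 hj).2]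
  ring

lemma mul_norm_sub_extrapolation {E : Type*} [SeminormedAddCommGroup E] [NormedSpace ℝ E]
    {b : ℝ} (hb : b ∈ Set.Ioc (0 : ℝ) 1) (x y : E) :
    b * ‖y - ((1 - 1 / b) • x + (1 / b) • y)‖ = (1 - b) * ‖y - x‖ := by
  have hb0 : b ≠ 0 := hb.1.ne'
  have hinv : 0 ≤ 1 / b - 1 := by
    rw [sub_nonneg, le_div_iff₀ hb.1, one_mul]
    exact hb.2
  have hdiff : y - ((1 - 1 / b) • x + (1 / b) • y) = (1 / b - 1) • (x - y) := by module
  rw [hdiff, norm_smul, Real.norm_of_nonneg hinv, norm_sub_rev, ← mul_assoc]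
  field_simp

lemma Fseq_add_two_le {p : ℕ} {β : ℕ → ℝ} (hβ : ∀ i, β i ∈ Set.Ioc (0 : ℝ) 1)
    (θ z : ℕ → EuclideanSpace ℝ (Fin p))
    (hz : ∀ t, z (t + 1) = (1 - 1 / β t) • θ t + (1 / β t) • θ (t + 1)) (n : ℕ) :
    Fseq β θ z (n + 2)
      ≤ (1 - β (n + 1)) * (Fseq β θ z (n + 1) + 2 * ‖θ (n + 2) - θ (n + 1)‖) := by
  set D := ‖θ (n + 2) - θ (n + 1)‖
  have hβ' : ∀ i, β i ∈ Set.Icc (0 : ℝ) 1 := fun i => Set.Ioc_subset_Icc_self (hβ i)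
  have hold : ∑ j ∈ Icc 1 n, smoothingCoef β j n * ‖θ (n + 2) - z (j + 1)‖
      ≤ Fseq β θ z (n + 1) + D :=
    calc ∑ j ∈ Icc 1 n, smoothingCoef β j n * ‖θ (n + 2) - z (j + 1)‖
        ≤ ∑ j ∈ Icc 1 n, smoothingCoef β j n * (‖θ (n + 1) - z (j + 1)‖ + D) :=
          sum_le_sum fun j _ => mul_le_mul_of_nonneg_left
            ((norm_sub_le_norm_sub_add_norm_sub _ (θ (n + 1)) _).trans_eq (by rw [add_comm]))
            (smoothingCoef_nonneg hβ' j n)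
      _ = Fseq β θ z (n + 1) + (∑ j ∈ Icc 1 n, smoothingCoef β j n) * D := by
          simp only [Fseq, add_tsub_cancel_right, mul_add, sum_add_distrib, sum_mul]
      _ ≤ Fseq β θ z (n + 1) + D := by
          grw [sum_smoothingCoef_le_one (fun i => (hβ i).2) n, one_mul]
  have hnew : β (n + 1) * ‖θ (n + 2) - z (n + 2)‖ = (1 - β (n + 1)) * D := by
    rw [hz (n + 1)]
    exact mul_norm_sub_extrapolation (hβ (n + 1)) _ _
  rw [Fseq_add_two, hnew]
  linarith [mul_le_mul_of_nonneg_left hold (sub_nonneg.2 (hβ (n + 1)).2)]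

lemma sq_one_sub_mul_add_le {b : ℝ} (hb : b ∈ Set.Ioc (0 : ℝ) 1) (a c : ℝ) :
    ((1 - b) * (a + c)) ^ 2 ≤ (1 - b) * a ^ 2 + 1 / b * c ^ 2 := by
  obtain ⟨hb0, hb1⟩ := hb
  have young : (a + c) ^ 2 ≤ (1 + b) * a ^ 2 + (1 + 1 / b) * c ^ 2 := by
    have : 0 ≤ (b * a - c) ^ 2 / b := by positivity
    have hexp : (b * a - c) ^ 2 / b = b * a ^ 2 - 2 * a * c + 1 / b * c ^ 2 := by
      field_simp
      ring
    nlinarith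
  have hfa : (1 - b) ^ 2 * (1 + b) ≤ 1 - b := by
    nlinarith [mul_nonneg (sub_nonneg.2 hb1) (sq_nonneg b)]
  have hfc : (1 - b) ^ 2 * (1 + 1 / b) ≤ 1 / b := by
    rw [show (1 - b) ^ 2 * (1 + 1 / b) = (1 - b) ^ 2 * (1 + b) / b by field_simp; ring]
    gcongr
    linarith
  calc ((1 - b) * (a + c)) ^ 2 = (1 - b) ^ 2 * (a + c) ^ 2 := mul_pow _ _ _
    _ ≤ (1 - b) ^ 2 * ((1 + b) * a ^ 2 + (1 + 1 / b) * c ^ 2) := by gcongr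
    _ = (1 - b) ^ 2 * (1 + b) * a ^ 2 + (1 - b) ^ 2 * (1 + 1 / b) * c ^ 2 := by ring
    _ ≤ (1 - b) * a ^ 2 + 1 / b * c ^ 2 := by gcongr

theorem extrapolation_F_recursion_general {p : ℕ}
    (β α : ℕ → ℝ) (hβ : ∀ t, β t ∈ Set.Ioc (0 : ℝ) 1)
    (θ z : ℕ → EuclideanSpace ℝ (Fin p)) (d : ℕ → EuclideanSpace ℝ (Fin p))
    (M ξ : ℝ)
    (hd : ∀ t, ‖d t‖ ≤ M / ξ)
    (hθ : ∀ t, θ (t + 1) = θ t - α t • d t)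
    (hz : ∀ t, z (t + 1) = (1 - 1 / β t) • θ t + (1 / β t) • θ (t + 1)) :
    ∀ t : ℕ, 2 ≤ t →
      Fseq β θ z t ≤ (1 - β (t - 1)) * (Fseq β θ z (t - 1) + 2 * ‖θ t - θ (t - 1)‖)
      ∧ (Fseq β θ z t) ^ 2
          ≤ (1 - β (t - 1)) * (Fseq β θ z (t - 1)) ^ 2
            + 4 / β (t - 1) * ‖θ t - θ (t - 1)‖ ^ 2
      ∧ (Fseq β θ z t) ^ 2
          ≤ (1 - β (t - 1)) * (Fseq β θ z (t - 1)) ^ 2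
            + (4 * M ^ 2 / ξ ^ 2) * ((α (t - 1)) ^ 2 / β (t - 1)) := by
  intro t ht
  obtain ⟨n, rfl⟩ : ∃ n, t = n + 2 := ⟨t - 2, by omega⟩
  rw [show n + 2 - 1 = n + 1 by omega]
  have hrec := Fseq_add_two_le hβ θ z hz n
  have hsq : Fseq β θ z (n + 2) ^ 2 ≤ (1 - β (n + 1)) * Fseq β θ z (n + 1) ^ 2
      + 4 / β (n + 1) * ‖θ (n + 2) - θ (n + 1)‖ ^ 2 :=
    calc Fseq β θ z (n + 2) ^ 2
        ≤ ((1 - β (n + 1)) * (Fseq β θ z (n + 1) + 2 * ‖θ (n + 2) - θ (n + 1)‖)) ^ 2 :=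
          pow_le_pow_left₀ (Fseq_nonneg (fun i => Set.Ioc_subset_Icc_self (hβ i)) θ z _) hrec 2
      _ ≤ (1 - β (n + 1)) * Fseq β θ z (n + 1) ^ 2
            + 1 / β (n + 1) * (2 * ‖θ (n + 2) - θ (n + 1)‖) ^ 2 :=
          sq_one_sub_mul_add_le (hβ (n + 1)) _ _
      _ = _ := by ring
  have hstep : ‖θ (n + 2) - θ (n + 1)‖ ≤ |α (n + 1)| * (M / ξ) := by
    rw [hθ (n + 1), sub_sub_cancel_left, norm_neg, norm_smul, Real.norm_eq_abs]
    exact mul_le_mul_of_nonneg_left (hd (n + 1)) (abs_nonneg _)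
  refine ⟨hrec, hsq, hsq.trans ?_⟩
  grw [hstep]
  · rw [mul_pow, sq_abs, div_pow]
    apply le_of_eq
    field_simp
  · have := (hβ (n + 1)).1
    positivity

/-- for ADAM-style updates `θ_{t+1} = θₜ − αₜdₜ` with `‖dₜ‖ ≤ M/ξ` and
extrapolation `z_{t+1} = (1 − 1/βₜ)θₜ + (1/βₜ)θ_{t+1}`, the quantity `ℱₜ` satisfies
`ℱₜ ≤ (1 − β_{t−1})(ℱ_{t−1} + 2‖θₜ − θ_{t−1}‖)` and consequently
`ℱₜ² ≤ (1 − β_{t−1})ℱ_{t−1}² + (4/β_{t−1})‖θₜ − θ_{t−1}‖²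
     ≤ (1 − β_{t−1})ℱ_{t−1}² + (4M²/ξ²)α_{t−1}²/β_{t−1}`. -/
theorem extrapolation_F_recursion {p : ℕ}
    (β α : ℕ → ℝ) (hβ : ∀ t, β t ∈ Set.Ioc (0 : ℝ) 1)
    (θ z : ℕ → EuclideanSpace ℝ (Fin p)) (d : ℕ → EuclideanSpace ℝ (Fin p))
    (M ξ : ℝ) (hξ : 0 < ξ) (hM : 0 ≤ M)
    (hd : ∀ t, ‖d t‖ ≤ M / ξ)
    (hθ : ∀ t, θ (t + 1) = θ t - α t • d t)
    (hz : ∀ t, z (t + 1) = (1 - 1 / β t) • θ t + (1 / β t) • θ (t + 1)) :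
    ∀ t : ℕ, 2 ≤ t →
      Fseq β θ z t ≤ (1 - β (t - 1)) * (Fseq β θ z (t - 1) + 2 * ‖θ t - θ (t - 1)‖)
      ∧ (Fseq β θ z t) ^ 2
          ≤ (1 - β (t - 1)) * (Fseq β θ z (t - 1)) ^ 2
            + 4 / β (t - 1) * ‖θ t - θ (t - 1)‖ ^ 2
      ∧ (Fseq β θ z t) ^ 2
          ≤ (1 - β (t - 1)) * (Fseq β θ z (t - 1)) ^ 2
            + (4 * M ^ 2 / ξ ^ 2) * ((α (t - 1)) ^ 2 / β (t - 1)) :=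
  extrapolation_F_recursion_general β α hβ θ z d M ξ hd hθ hz
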